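/- Let s ∈ ℝ, and suppose either p ∈ (0,∞], q ∈ (0,∞) and τ ∈ (1/p, ∞), or q = ∞ and τ ∈ [1/p, ∞) (with 1/∞ := 0). Then the Besov-type sequence norm ‖t‖_{ḃ^{s,τ}_{p,q}} is equivalent to ‖t‖_{ḃ^{s+n(τ-1/p)}_{∞,∞}} = sup_{Q dyadic} |Q|^{-(s+n(τ-1/p))/n - 1/2} |t_Q|; that is, there are constants c, C > 0 such that c‖t‖_{ḃ^{s+n(τ-1/p)}_{∞,∞}} ≤ ‖t‖_{ḃ^{s,τ}_{p,q}} ≤ C‖t‖_{ḃ^{s+n(τ-1/p)}_{∞,∞}} for all sequences t. -/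

import Mathlib

open MeasureTheory ENNReal

/-- A dyadic cube `Q_{jk} = 2^{-j}([0,1)^n + k)` in `ℝⁿ`, recorded by its
generation `j ∈ ℤ` and position `k ∈ ℤⁿ`. -/
structure DyadicCube (n : ℕ) where
  j : ℤ
  k : Fin n → ℤ

namespace DyadicCube

/-- The dyadic cube as a subset of `ℝⁿ`. -/
def toSet {n : ℕ} (Q : DyadicCube n) : Set (Fin n → ℝ) :=
  {x | ∀ i, (Q.k i : ℝ) * (2 : ℝ) ^ (-Q.j) ≤ x i ∧
        x i < ((Q.k i : ℝ) + 1) * (2 : ℝ) ^ (-Q.j)}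

/-- The Lebesgue measure `|Q| = 2^{-jn}` of a dyadic cube, as an element of `ℝ≥0∞`. -/
noncomputable def vol {n : ℕ} (Q : DyadicCube n) : ℝ≥0∞ :=
  (2 : ℝ≥0∞) ^ (-(Q.j : ℝ) * n)

/-- The characteristic function `χ_Q`, with values in `ℝ≥0∞`. -/
noncomputable def ind {n : ℕ} (Q : DyadicCube n) (x : Fin n → ℝ) : ℝ≥0∞ :=
  Q.toSet.indicator (fun _ => (1 : ℝ≥0∞)) x

end DyadicCube

open DyadicCube

/-- The coefficient `|Q|^{-s/n - 1/2}`. -/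
noncomputable def coeff {n : ℕ} (s : ℝ) (Q : DyadicCube n) : ℝ≥0∞ :=
  Q.vol ^ (-(s / (n : ℝ)) - 1 / 2)

/-- The `ℓ^q`-norm `(Σ_i a_i^q)^{1/q}` of a family of extended nonnegative reals,
with the usual modification (`sup`) when `q = ∞`. -/
noncomputable def lqSum {ι : Type*} (q : ℝ≥0∞) (a : ι → ℝ≥0∞) : ℝ≥0∞ :=
  if q = ∞ then ⨆ i, a i else (∑' i, a i ^ q.toReal) ^ (1 / q.toReal)

/-- The `L^p`-norm `(∫_A g^p dx)^{1/p}` over a set `A ⊆ ℝⁿ`, with the usual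
modification (`sup` over `x ∈ A`) when `p = ∞`. -/
noncomputable def lpIntOn {n : ℕ} (p : ℝ≥0∞) (A : Set (Fin n → ℝ))
    (g : (Fin n → ℝ) → ℝ≥0∞) : ℝ≥0∞ :=
  if p = ∞ then ⨆ x ∈ A, g x
  else (∫⁻ x in A, g x ^ p.toReal) ^ (1 / p.toReal)

/-- The Triebel–Lizorkin-type sequence norm
`‖t‖_{ḟ^{s,τ}_{p,q}} = sup_P |P|^{-τ} ( ∫_P ( Σ_{Q ⊆ P} [|Q|^{-s/n-1/2} |t_Q| χ_Q(x)]^q )^{p/q} dx )^{1/p}`,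
with the usual modifications when `p = ∞` or `q = ∞`. -/
noncomputable def fNorm (n : ℕ) (s τ : ℝ) (p q : ℝ≥0∞) (t : DyadicCube n → ℂ) : ℝ≥0∞ :=
  ⨆ P : DyadicCube n, P.vol ^ (-τ) *
    lpIntOn p P.toSet fun x =>
      lqSum q fun Q : {Q : DyadicCube n // Q.toSet ⊆ P.toSet} =>
        coeff s Q.1 * ‖t Q.1‖₊ * ind Q.1 x

/-- The Besov-type sequence norm
`‖t‖_{ḃ^{s,τ}_{p,q}} = sup_P |P|^{-τ} ( Σ_{j ≥ j_P} ( ∫_P [ Σ_{Q ⊆ P, ℓ(Q)=2^{-j}} |Q|^{-s/n-1/2} |t_Q| χ_Q(x) ]^p dx )^{q/p} )^{1/q}`,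
with the usual modifications when `p = ∞` or `q = ∞`. -/
noncomputable def bNorm (n : ℕ) (s τ : ℝ) (p q : ℝ≥0∞) (t : DyadicCube n → ℂ) : ℝ≥0∞ :=
  ⨆ P : DyadicCube n, P.vol ^ (-τ) *
    lqSum q fun j : {j : ℤ // P.j ≤ j} =>
      lpIntOn p P.toSet fun x =>
        ∑' Q : {Q : DyadicCube n // Q.toSet ⊆ P.toSet ∧ Q.j = j.1},
          coeff s Q.1 * ‖t Q.1‖₊ * ind Q.1 x

/-- The `ḟ^{σ}_{∞,∞} = ḃ^{σ}_{∞,∞}` sequence norm `sup_Q |Q|^{-σ/n - 1/2} |t_Q|`. -/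
noncomputable def supNorm (n : ℕ) (σ : ℝ) (t : DyadicCube n → ℂ) : ℝ≥0∞ :=
  ⨆ Q : DyadicCube n, coeff σ Q * ‖t Q‖₊

/-- The test sequence with `t_{R_j} = |R_j|^{s/n + 1/2 + τ - 1/p}` for
`R_j = [0,2^{-j})^n` (the dyadic cube with `k = 0`), and `t_Q = 0` otherwise. -/
noncomputable def testSeq (n : ℕ) (s τ p : ℝ) : DyadicCube n → ℂ := fun Q =>
  if Q.k = 0 then
    ((((2 : ℝ) ^ (-(Q.j : ℝ) * n)) ^ (s / n + 1 / 2 + τ - 1 / p) : ℝ) : ℂ)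
  else 0

/-- The cube `R_j = [0, 2^{-j})^n`. -/
def Rcube (n : ℕ) (j : ℤ) : DyadicCube n := ⟨j, 0⟩

/-!
The lower bound only tests the supremum at `P = Q` and `j = j_Q`, where the layer is
`|Q|^{-s/n-1/2} |t_Q| χ_Q` and `|Q|^{-τ} ‖·‖_{L^p(Q)}` turns it into
`|Q|^{-(s+n(τ-1/p))/n-1/2} |t_Q|`.

For the upper bound, the cubes of one generation `j` are disjoint, so the `j`-th layer is
pointwise at most `‖t‖ 2^{-jn(τ-1/p)}` with `‖t‖ = ‖t‖_{ḃ^{s+n(τ-1/p)}_{∞,∞}}`; its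
`L^p(P)` norm gains `|P|^{1/p}`, and the `ℓ^q` norm over `j ≥ j_P` is the geometric factor
`‖(ρ^m)_{m ∈ ℕ}‖_{ℓ^q}`, `ρ = 2^{-n(τ-1/p)}`, times `2^{-j_P n(τ-1/p)}`. The powers of `|P|`
cancel, and the geometric factor is finite when `ρ < 1`, or `q = ∞` and `ρ ≤ 1`.
-/

namespace DyadicCube

variable {n : ℕ}

lemma toSet_eq_pi (Q : DyadicCube n) :
    Q.toSet = Set.univ.pi fun i =>
      Set.Ico ((Q.k i : ℝ) * 2 ^ (-Q.j)) (((Q.k i : ℝ) + 1) * 2 ^ (-Q.j)) := by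
  ext x
  simp [toSet, Set.mem_pi]

lemma measurableSet_toSet (Q : DyadicCube n) : MeasurableSet Q.toSet := by
  rw [toSet_eq_pi]
  exact .univ_pi fun _ => measurableSet_Ico

lemma volume_toSet (Q : DyadicCube n) : volume Q.toSet = Q.vol := by
  have hside : ENNReal.ofReal ((2 : ℝ) ^ (-Q.j)) = (2 : ℝ≥0∞) ^ (-(Q.j : ℝ)) := by
    rw [← Real.rpow_intCast, ← ENNReal.ofReal_rpow_of_pos two_pos]
    norm_num
  rw [toSet_eq_pi, volume_pi_pi]
  simp only [Real.volume_Ico, show ∀ a : ℝ, (a + 1) * 2 ^ (-Q.j) - a * 2 ^ (-Q.j) = 2 ^ (-Q.j)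
    from fun a => by ring, hside, Finset.prod_const, Finset.card_univ, Fintype.card_fin]
  rw [vol, ← ENNReal.rpow_natCast, ← ENNReal.rpow_mul]

lemma corner_mem_toSet (Q : DyadicCube n) : (fun i => (Q.k i : ℝ) * 2 ^ (-Q.j)) ∈ Q.toSet :=
  fun _ => ⟨le_rfl, by have := zpow_pos (two_pos (α := ℝ)) (-Q.j); linarith⟩

lemma floor_eq_k {Q : DyadicCube n} {x : Fin n → ℝ} (hx : x ∈ Q.toSet) (i : Fin n) :
    ⌊x i / 2 ^ (-Q.j)⌋ = Q.k i := by
  have h2 : (0 : ℝ) < 2 ^ (-Q.j) := zpow_pos two_pos _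
  exact Int.floor_eq_iff.2 ⟨(le_div_iff₀ h2).2 (hx i).1, (div_lt_iff₀ h2).2 (hx i).2⟩

lemma eq_of_j_eq_of_mem {Q Q' : DyadicCube n} (hj : Q.j = Q'.j) {x : Fin n → ℝ}
    (hx : x ∈ Q.toSet) (hx' : x ∈ Q'.toSet) : Q = Q' := by
  obtain ⟨j, k⟩ := Q
  obtain ⟨j', k'⟩ := Q'
  obtain rfl : j = j' := hj
  congr
  funext i
  exact (floor_eq_k hx i).symm.trans (floor_eq_k hx' i)

lemma vol_ne_zero (Q : DyadicCube n) : Q.vol ≠ 0 := by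
  simp [vol, ENNReal.rpow_eq_zero_iff]

lemma vol_ne_top (Q : DyadicCube n) : Q.vol ≠ ∞ := by
  simp [vol, ENNReal.rpow_eq_top_iff]

lemma vol_rpow_add (Q : DyadicCube n) (x y : ℝ) : Q.vol ^ (x + y) = Q.vol ^ x * Q.vol ^ y :=
  ENNReal.rpow_add x y Q.vol_ne_zero Q.vol_ne_top

lemma vol_rpow_of_j_eq_add {Q P : DyadicCube n} {m : ℕ} (h : Q.j = P.j + m) (a : ℝ) :
    Q.vol ^ a = P.vol ^ a * ((2 : ℝ≥0∞) ^ (-(n : ℝ) * a)) ^ m := by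
  rw [vol, vol, ← ENNReal.rpow_natCast, ← ENNReal.rpow_mul, ← ENNReal.rpow_mul,
    ← ENNReal.rpow_mul, ← ENNReal.rpow_add _ _ two_ne_zero ofNat_ne_top, h]
  congr 1
  push_cast
  ring

lemma vol_rpow_neg_mul_rpow_sub_mul_rpow (Q : DyadicCube n) (τ r : ℝ) :
    Q.vol ^ (-τ) * Q.vol ^ (τ - r) * Q.vol ^ r = 1 := by
  rw [← Q.vol_rpow_add, ← Q.vol_rpow_add, show -τ + (τ - r) + r = 0 by ring, ENNReal.rpow_zero]

end DyadicCube

lemma coeff_eq_coeff_add_mul {n : ℕ} (hn : n ≠ 0) (s a : ℝ) (Q : DyadicCube n) :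
    coeff s Q = coeff (s + n * a) Q * Q.vol ^ a := by
  rw [coeff, coeff, ← Q.vol_rpow_add]
  congr 1
  field_simp
  ring

lemma ENNReal.tsum_le_of_support_subsingleton {ι : Type*} {f : ι → ℝ≥0∞} {c : ℝ≥0∞}
    (hf : (Function.support f).Subsingleton) (hc : ∀ i, f i ≤ c) : ∑' i, f i ≤ c := by
  rcases hf.eq_empty_or_singleton with h | ⟨i, h⟩
  · simp [Function.support_eq_empty_iff.1 h]
  · rw [tsum_eq_single i fun j hj =>
      Function.notMem_support.1 fun hj' => hj (by simpa [h] using hj')]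
    exact hc i

def natEquivIntGe (c : ℤ) : ℕ ≃ {j : ℤ // c ≤ j} where
  toFun m := ⟨c + m, by omega⟩
  invFun j := (j.1 - c).toNat
  left_inv m := by simp
  right_inv j := Subtype.ext (by simp [Int.toNat_of_nonneg (sub_nonneg.2 j.2)])

section lqSum

variable {ι κ : Type*} {q : ℝ≥0∞}

lemma le_lqSum (hq : q ≠ 0) (a : ι → ℝ≥0∞) (i : ι) : a i ≤ lqSum q a := by
  unfold lqSum
  split_ifs with hq'
  · exact le_iSup a i
  · have hqr : q.toReal ≠ 0 := ENNReal.toReal_ne_zero.2 ⟨hq, hq'⟩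
    calc a i = (a i ^ q.toReal) ^ (1 / q.toReal) := by
          rw [← ENNReal.rpow_mul, mul_one_div_cancel hqr, ENNReal.rpow_one]
      _ ≤ _ := by gcongr; exact ENNReal.le_tsum i

lemma lqSum_mono {a b : ι → ℝ≥0∞} (h : ∀ i, a i ≤ b i) : lqSum q a ≤ lqSum q b := by
  unfold lqSum
  split_ifs
  · exact iSup_mono h
  · gcongr with i
    exact h i

lemma lqSum_const_mul (hq : q ≠ 0) (c : ℝ≥0∞) (a : ι → ℝ≥0∞) :
    lqSum q (fun i => c * a i) = c * lqSum q a := by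
  unfold lqSum
  split_ifs with hq'
  · exact ENNReal.mul_iSup c a |>.symm
  · have hqr : q.toReal ≠ 0 := ENNReal.toReal_ne_zero.2 ⟨hq, hq'⟩
    simp only [ENNReal.mul_rpow_of_nonneg _ _ ENNReal.toReal_nonneg, ENNReal.tsum_mul_left]
    rw [ENNReal.mul_rpow_of_nonneg _ _ (by positivity), ← ENNReal.rpow_mul,
      mul_one_div_cancel hqr, ENNReal.rpow_one]

lemma lqSum_comp_equiv (e : κ ≃ ι) (a : ι → ℝ≥0∞) : lqSum q (a ∘ e) = lqSum q a := by
  unfold lqSum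
  split_ifs
  · exact e.iSup_comp
  · rw [Function.comp_def, e.tsum_eq (fun i => a i ^ q.toReal)]

lemma lqSum_geometric_ne_top (hq : q ≠ 0) {ρ : ℝ≥0∞} (hρ : ρ < 1 ∨ q = ∞ ∧ ρ ≤ 1) :
    lqSum q (fun m : ℕ => ρ ^ m) ≠ ∞ := by
  unfold lqSum
  split_ifs with hq'
  · refine ne_top_of_le_ne_top one_ne_top (iSup_le fun m => pow_le_one₀ zero_le ?_)
    rcases hρ with hρ | ⟨-, hρ⟩
    exacts [hρ.le, hρ]
  · have hqr : 0 < q.toReal := ENNReal.toReal_pos hq hq'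
    have hρq : ρ ^ q.toReal < 1 := by
      rcases hρ with hρ | ⟨hq'', -⟩
      exacts [ENNReal.rpow_lt_one hρ hqr, absurd hq'' hq']
    have hswap (m : ℕ) : (ρ ^ m) ^ q.toReal = (ρ ^ q.toReal) ^ m := by
      rw [← ENNReal.rpow_natCast_mul, mul_comm, ENNReal.rpow_mul_natCast]
    simp only [hswap, ENNReal.tsum_geometric]
    exact ENNReal.rpow_ne_top_of_nonneg (by positivity)
      (ENNReal.inv_ne_top.2 (tsub_pos_of_lt hρq).ne')

end lqSum

section lpIntOn

variable {n : ℕ} {p : ℝ≥0∞} {A : Set (Fin n → ℝ)}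

lemma lpIntOn_mono (hA : MeasurableSet A) {f g : (Fin n → ℝ) → ℝ≥0∞}
    (h : ∀ x ∈ A, f x ≤ g x) : lpIntOn p A f ≤ lpIntOn p A g := by
  unfold lpIntOn
  split_ifs
  · exact iSup₂_mono h
  · gcongr ?_ ^ _
    exact setLIntegral_mono' hA fun x hx => by gcongr; exact h x hx

lemma lpIntOn_const (hp : p ≠ 0) (hA : A.Nonempty) (c : ℝ≥0∞) :
    lpIntOn p A (fun _ => c) = c * volume A ^ (1 / p.toReal) := by
  unfold lpIntOn
  split_ifs with hp'
  · simp [biSup_const hA, hp']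
  · have hpr : p.toReal ≠ 0 := ENNReal.toReal_ne_zero.2 ⟨hp, hp'⟩
    rw [setLIntegral_const, ENNReal.mul_rpow_of_nonneg _ _ (by positivity), ← ENNReal.rpow_mul,
      mul_one_div_cancel hpr, ENNReal.rpow_one]

end lpIntOn

lemma tsum_coeff_mul_ind_le {n : ℕ} (hn : n ≠ 0) (s a : ℝ) (t : DyadicCube n → ℂ)
    (S : Set (Fin n → ℝ)) (j : ℤ) (x : Fin n → ℝ) :
    ∑' Q : {Q : DyadicCube n // Q.toSet ⊆ S ∧ Q.j = j}, coeff s Q.1 * ‖t Q.1‖₊ * Q.1.ind x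
      ≤ supNorm n (s + n * a) t * (Rcube n j).vol ^ a := by
  have hmem {Q : DyadicCube n} {c : ℝ≥0∞} (h : c * Q.ind x ≠ 0) : x ∈ Q.toSet :=
    Set.mem_of_indicator_ne_zero (right_ne_zero_of_mul h)
  refine ENNReal.tsum_le_of_support_subsingleton ?_ fun Q => ?_
  · intro Q hQ Q' hQ'
    exact Subtype.ext <|
      DyadicCube.eq_of_j_eq_of_mem (Q.2.2.trans Q'.2.2.symm) (hmem hQ) (hmem hQ')
  · have hvol : Q.1.vol = (Rcube n j).vol := by rw [Rcube, DyadicCube.vol, DyadicCube.vol, Q.2.2]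
    calc coeff s Q.1 * ‖t Q.1‖₊ * Q.1.ind x ≤ coeff s Q.1 * ‖t Q.1‖₊ :=
          mul_le_of_le_one_right' (Set.indicator_apply_le' (fun _ => le_rfl) fun _ => zero_le)
      _ = coeff (s + n * a) Q.1 * ‖t Q.1‖₊ * (Rcube n j).vol ^ a := by
          rw [coeff_eq_coeff_add_mul hn s a, hvol]
          ring
      _ ≤ _ := by
          gcongr
          exact le_iSup (fun Q => coeff (s + n * a) Q * ‖t Q‖₊) Q.1

theorem supNorm_le_bNorm {n : ℕ} (hn : n ≠ 0) {p q : ℝ≥0∞} (hp : p ≠ 0) (hq : q ≠ 0)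
    (s τ : ℝ) (t : DyadicCube n → ℂ) :
    supNorm n (s + n * (τ - 1 / p.toReal)) t ≤ bNorm n s τ p q t := by
  set r := 1 / p.toReal
  refine iSup_le fun Q => ?_
  have hdiag : coeff s Q * ‖t Q‖₊ * Q.vol ^ r ≤ lpIntOn p Q.toSet fun x =>
      ∑' R : {R : DyadicCube n // R.toSet ⊆ Q.toSet ∧ R.j = Q.j},
        coeff s R.1 * ‖t R.1‖₊ * R.1.ind x := by
    rw [← Q.volume_toSet, ← lpIntOn_const hp ⟨_, Q.corner_mem_toSet⟩]
    refine lpIntOn_mono Q.measurableSet_toSet fun x hx => ?_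
    simpa [DyadicCube.ind, hx] using ENNReal.le_tsum (f := fun R : {R : DyadicCube n //
      R.toSet ⊆ Q.toSet ∧ R.j = Q.j} => coeff s R.1 * ‖t R.1‖₊ * R.1.ind x) ⟨Q, subset_rfl, rfl⟩
  calc coeff (s + n * (τ - r)) Q * ‖t Q‖₊
      = Q.vol ^ (-τ) * (coeff s Q * ‖t Q‖₊ * Q.vol ^ r) := by
        rw [coeff_eq_coeff_add_mul hn s (τ - r), ← mul_one (coeff (s + n * (τ - r)) Q * _),
          ← Q.vol_rpow_neg_mul_rpow_sub_mul_rpow τ r]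
        ring
    _ ≤ Q.vol ^ (-τ) * lqSum q fun j : {j : ℤ // Q.j ≤ j} => lpIntOn p Q.toSet fun x =>
          ∑' R : {R : DyadicCube n // R.toSet ⊆ Q.toSet ∧ R.j = j.1},
            coeff s R.1 * ‖t R.1‖₊ * R.1.ind x := by
        gcongr
        exact hdiag.trans (le_lqSum hq _ (⟨Q.j, le_rfl⟩ : {j : ℤ // Q.j ≤ j}))
    _ ≤ bNorm n s τ p q t := le_iSup (fun P : DyadicCube n => P.vol ^ (-τ) * _) Q

theorem bNorm_le_lqSum_geometric_mul_supNorm {n : ℕ} (hn : n ≠ 0) {p q : ℝ≥0∞} (hp : p ≠ 0)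
    (hq : q ≠ 0) (s τ : ℝ) (t : DyadicCube n → ℂ) :
    bNorm n s τ p q t ≤ lqSum q (fun m : ℕ => ((2 : ℝ≥0∞) ^ (-(n : ℝ) * (τ - 1 / p.toReal))) ^ m) *
      supNorm n (s + n * (τ - 1 / p.toReal)) t := by
  set r := 1 / p.toReal
  set ρ := (2 : ℝ≥0∞) ^ (-(n : ℝ) * (τ - r))
  set M := supNorm n (s + n * (τ - r)) t
  refine iSup_le fun P => ?_
  have hlayer (j : {j : ℤ // P.j ≤ j}) : (lpIntOn p P.toSet fun x =>
      ∑' Q : {Q : DyadicCube n // Q.toSet ⊆ P.toSet ∧ Q.j = j.1},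
        coeff s Q.1 * ‖t Q.1‖₊ * Q.1.ind x) ≤
      M * P.vol ^ (τ - r) * P.vol ^ r * ρ ^ (j.1 - P.j).toNat := by
    have hj : (Rcube n j.1).j = P.j + (j.1 - P.j).toNat := by
      show j.1 = _
      omega
    calc _ ≤ lpIntOn p P.toSet fun _ => M * (Rcube n j.1).vol ^ (τ - r) :=
          lpIntOn_mono P.measurableSet_toSet fun x _ => tsum_coeff_mul_ind_le hn s _ t _ _ x
      _ = _ := by
          rw [lpIntOn_const hp ⟨_, P.corner_mem_toSet⟩, P.volume_toSet,
            DyadicCube.vol_rpow_of_j_eq_add hj]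
          ring
  calc P.vol ^ (-τ) * _
      ≤ P.vol ^ (-τ) * lqSum q fun j : {j : ℤ // P.j ≤ j} =>
          M * P.vol ^ (τ - r) * P.vol ^ r * ρ ^ (j.1 - P.j).toNat := by
        gcongr
        exact lqSum_mono hlayer
    _ = lqSum q (fun m : ℕ => ρ ^ m) * M * (P.vol ^ (-τ) * P.vol ^ (τ - r) * P.vol ^ r) := by
        rw [lqSum_const_mul hq, ← lqSum_comp_equiv (natEquivIntGe P.j)]
        simp only [Function.comp_def, natEquivIntGe, Equiv.coe_fn_mk, add_sub_cancel_left,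
          Int.toNat_natCast]
        ring
    _ = _ := by rw [P.vol_rpow_neg_mul_rpow_sub_mul_rpow, mul_one]

/-- if `p ∈ (0,∞]` and either `q ∈ (0,∞)` with `τ ∈ (1/p,∞)`, or `q = ∞`
with `τ ∈ [1/p,∞)` (where `1/∞ := 0`), then the Besov-type sequence norm
`‖t‖_{ḃ^{s,τ}_{p,q}}` is equivalent to `‖t‖_{ḃ^{s+n(τ-1/p)}_{∞,∞}}`. -/
theorem stmt2 (n : ℕ) (hn : 0 < n) (s τ : ℝ) (p q : ℝ≥0∞) (hp : 0 < p)
    (h : (q ≠ ∞ ∧ 0 < q ∧ 1 / p.toReal < τ) ∨ (q = ∞ ∧ 1 / p.toReal ≤ τ)) :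
    ∃ c C : ℝ≥0∞, 0 < c ∧ C ≠ ∞ ∧ ∀ t : DyadicCube n → ℂ,
      c * supNorm n (s + n * (τ - 1 / p.toReal)) t ≤ bNorm n s τ p q t ∧
      bNorm n s τ p q t ≤ C * supNorm n (s + n * (τ - 1 / p.toReal)) t := by
  have hq : q ≠ 0 := by
    rcases h with ⟨-, hq, -⟩ | ⟨rfl, -⟩
    exacts [hq.ne', top_ne_zero]
  have hρ : (2 : ℝ≥0∞) ^ (-(n : ℝ) * (τ - 1 / p.toReal)) < 1 ∨
      q = ∞ ∧ (2 : ℝ≥0∞) ^ (-(n : ℝ) * (τ - 1 / p.toReal)) ≤ 1 := by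
    have hn' : (0 : ℝ) < n := Nat.cast_pos.2 hn
    rcases h with ⟨-, -, hτ⟩ | ⟨hq, hτ⟩
    · exact .inl <| ENNReal.rpow_lt_one_of_one_lt_of_neg one_lt_two (by nlinarith)
    · exact .inr ⟨hq, (ENNReal.rpow_le_rpow_of_exponent_le one_le_two
        (by nlinarith : -(n : ℝ) * (τ - 1 / p.toReal) ≤ 0)).trans_eq ENNReal.rpow_zero⟩
  refine ⟨1, _, one_pos, lqSum_geometric_ne_top hq hρ, fun t => ⟨?_, ?_⟩⟩
  · rw [one_mul]
    exact supNorm_le_bNorm hn.ne' hp.ne' hq s τ t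
  · exact bNorm_le_lqSum_geometric_mul_supNorm hn.ne' hp.ne' hq s τ t
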